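/- Let l ∈ ℕ, (ρ,σ) ∈ 𝔙⁰ and let P, Q ∈ A₁⁽ˡ⁾ be nonzero. If [P,Q]_{ρ,σ} = 0, then st_{ρ,σ}(P) × st_{ρ,σ}(Q) = 0 and en_{ρ,σ}(P) × en_{ρ,σ}(Q) = 0. -/

import Mathlib

open scoped BigOperators
open scoped Classical

noncomputable section

namespace Dixmier

variable (K : Type*) [Field K] [CharZero K]

/-- Laurent polynomials `K[t,t⁻¹]`. -/
abbrev Laur (K : Type*) [Field K] := LaurentPolynomial K

/-- The `K`-linear endomorphisms of `K[t,t⁻¹]`. -/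
abbrev E (K : Type*) [Field K] := Module.End K (Laur K)

/-- Multiplication by `t^i`, i.e. the element `X^{i/l}` of `A₁⁽ˡ⁾`. -/
def Xpow (i : ℤ) : E K := LinearMap.mulLeft K (LaurentPolynomial.T i)

/-- The operator `Y = (1/l)·t^{1-l}·d/dt` of `A₁⁽ˡ⁾`; it maps `t^n ↦ (n/l)·t^{n-l}`. -/
def Yop (l : ℕ) : E K :=
  (Finsupp.linearCombination K fun n : ℤ =>
    algebraMap ℚ K ((n : ℚ) / (l : ℚ)) • LaurentPolynomial.T (n - (l : ℤ))) ∘ₗ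
    (AddMonoidAlgebra.coeffLinearEquiv K).toLinearMap

/-- The algebra `A₁⁽ˡ⁾`: the subalgebra of endomorphisms of `K[t,t⁻¹]` generated by
multiplication by `t`, multiplication by `t⁻¹`, and `Y`. -/
def A1 (l : ℕ) : Subalgebra K (E K) :=
  Algebra.adjoin K {Xpow K 1, Xpow K (-1), Yop K l}

/-- The Weyl algebra `A₁`, identified with its copy inside `A₁⁽¹⁾`. -/
def Weyl : Subalgebra K (E K) :=
  Algebra.adjoin K {Xpow K 1, Yop K 1}

/-- Interpretation of a coefficient family: `f ↦ ∑ f (i,j) • X^{i/l} Y^j`. -/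
def toEnd (l : ℕ) : ((ℤ × ℕ) →₀ K) →ₗ[K] E K :=
  Finsupp.linearCombination K fun p : ℤ × ℕ => Xpow K p.1 * Yop K l ^ p.2

/-- The (unique) coefficient family representing `P ∈ A₁⁽ˡ⁾`. -/
def rep (l : ℕ) (P : E K) : (ℤ × ℕ) →₀ K :=
  if h : ∃ f, toEnd K l f = P then h.choose else 0

/-- The point `(i/l, j) ∈ ℚ²` attached to an exponent pair `(i,j)`. -/
def pt (l : ℕ) (p : ℤ × ℕ) : ℚ × ℚ := ((p.1 : ℚ) / (l : ℚ), (p.2 : ℚ))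

/-- The set of points `(i/l, j) ∈ ℚ²` in the support of a coefficient family. -/
def suppPts (l : ℕ) (f : (ℤ × ℕ) →₀ K) : Set (ℚ × ℚ) :=
  pt l '' (f.support : Set (ℤ × ℕ))

/-- The support of `P ∈ A₁⁽ˡ⁾`, as a subset of `(1/l)ℤ × ℕ₀ ⊆ ℚ²`. -/
def Supp (l : ℕ) (P : E K) : Set (ℚ × ℚ) := suppPts K l (rep K l P)

/-- `v_{ρ,σ}` on points of `ℚ²`. -/
def vp (ρ σ : ℤ) (q : ℚ × ℚ) : ℚ := ρ * q.1 + σ * q.2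

/-- `v_{ρ,σ}(P) ∈ WithBot ℚ` (with `v_{ρ,σ}(0) = ⊥ = -∞`). -/
def vdeg (ρ σ : ℤ) (l : ℕ) (P : E K) : WithBot ℚ :=
  (rep K l P).support.sup fun p => (vp ρ σ (pt l p) : WithBot ℚ)

/-- The coefficient family of the `(ρ,σ)`-leading part of `P`. -/
def ltRep (ρ σ : ℤ) (l : ℕ) (P : E K) : (ℤ × ℕ) →₀ K :=
  (rep K l P).filter fun p => (vp ρ σ (pt l p) : WithBot ℚ) = vdeg K ρ σ l P

/-- The commutative algebra `L⁽ˡ⁾ = K[x^{1/l}, x^{-1/l}, y]`; the monomial `x^{i/l}·y^j`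
corresponds to the exponent pair `(i,j) ∈ ℤ × ℕ`. -/
abbrev Lalg (K : Type*) [Field K] := AddMonoidAlgebra K (ℤ × ℕ)

/-- The `(ρ,σ)`-leading term `ℓ_{ρ,σ}(P) ∈ L⁽ˡ⁾`. -/
def ell (ρ σ : ℤ) (l : ℕ) (P : E K) : Lalg K := AddMonoidAlgebra.ofCoeff (ltRep K ρ σ l P)

/-- `R ∈ L⁽ˡ⁾` is `(ρ,σ)`-homogeneous: it is `0` or equal to its own leading term. -/
def IsHomogL (ρ σ : ℤ) (l : ℕ) (R : Lalg K) : Prop :=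
  ∀ p ∈ R.coeff.support, ∀ q ∈ R.coeff.support, vp ρ σ (pt l p) = vp ρ σ (pt l q)

/-- `F ∈ A₁⁽ˡ⁾` is `(ρ,σ)`-homogeneous. -/
def IsHomogE (ρ σ : ℤ) (l : ℕ) (F : E K) : Prop :=
  ∀ p ∈ (rep K l F).support, ∀ q ∈ (rep K l F).support,
    vp ρ σ (pt l p) = vp ρ σ (pt l q)

/-- `q` is the point of `Supp(ℓ_{ρ,σ}(P))` at which `v_{1,-1}` is maximal. -/
def IsStOf (ρ σ : ℤ) (l : ℕ) (P : E K) (q : ℚ × ℚ) : Prop :=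
  q ∈ suppPts K l (ltRep K ρ σ l P) ∧
    ∀ q' ∈ suppPts K l (ltRep K ρ σ l P), vp 1 (-1) q' ≤ vp 1 (-1) q

/-- `st_{ρ,σ}(P)`. -/
def stP (ρ σ : ℤ) (l : ℕ) (P : E K) : ℚ × ℚ :=
  if h : ∃ q, IsStOf K ρ σ l P q then h.choose else 0

/-- `q` is the point of `Supp(ℓ_{ρ,σ}(P))` at which `v_{-1,1}` is maximal. -/
def IsEnOf (ρ σ : ℤ) (l : ℕ) (P : E K) (q : ℚ × ℚ) : Prop :=
  q ∈ suppPts K l (ltRep K ρ σ l P) ∧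
    ∀ q' ∈ suppPts K l (ltRep K ρ σ l P), vp (-1) 1 q' ≤ vp (-1) 1 q

/-- `en_{ρ,σ}(P)`. -/
def enP (ρ σ : ℤ) (l : ℕ) (P : E K) : ℚ × ℚ :=
  if h : ∃ q, IsEnOf K ρ σ l P q then h.choose else 0

/-- `w(P)`: the point of `Supp(ℓ_{1,-1}(P))` with maximal first coordinate. -/
def IsWOf (l : ℕ) (P : E K) (q : ℚ × ℚ) : Prop :=
  q ∈ suppPts K l (ltRep K 1 (-1) l P) ∧
    ∀ q' ∈ suppPts K l (ltRep K 1 (-1) l P), q'.1 ≤ q.1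

def wP (l : ℕ) (P : E K) : ℚ × ℚ :=
  if h : ∃ q, IsWOf K l P q then h.choose else 0

/-- `w̄(P)`: the point of `Supp(ℓ_{-1,1}(P))` with maximal first coordinate. -/
def IsWBarOf (l : ℕ) (P : E K) (q : ℚ × ℚ) : Prop :=
  q ∈ suppPts K l (ltRep K (-1) 1 l P) ∧
    ∀ q' ∈ suppPts K l (ltRep K (-1) 1 l P), q'.1 ≤ q.1

def wBarP (l : ℕ) (P : E K) : ℚ × ℚ :=
  if h : ∃ q, IsWBarOf K l P q then h.choose else 0

/-- The cross product `A × B` on `ℚ²`. -/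
def cross (A B : ℚ × ℚ) : ℚ := A.1 * B.2 - A.2 * B.1

/-- The set of directions `𝔙̄`. -/
def VBar (ρ σ : ℤ) : Prop := Int.gcd ρ σ = 1 ∧ 0 ≤ ρ + σ

/-- The set of directions `𝔙`. -/
def V (ρ σ : ℤ) : Prop := Int.gcd ρ σ = 1 ∧ 0 < ρ + σ

/-- The set of directions `𝔙⁰`. -/
def V0 (ρ σ : ℤ) : Prop := V ρ σ ∧ 0 < ρ

/-- The order on directions: `(1,-1)` is smallest, `(-1,1)` is largest, and otherwise
`(ρ,σ) < (ρ',σ')` iff `ρσ' - σρ' > 0`. -/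
def dirLt (ρ σ ρ' σ' : ℤ) : Prop :=
  ((ρ, σ) = ((1 : ℤ), (-1 : ℤ)) ∧ (ρ', σ') = ((-1 : ℤ), (1 : ℤ))) ∨ 0 < ρ * σ' - σ * ρ'

/-- The commutator `[P,Q] = PQ - QP`. -/
def brk (P Q : E K) : E K := P * Q - Q * P

/-- `P` and `Q` are `(ρ,σ)`-proportional:
`v_{ρ,σ}([P,Q]) < v_{ρ,σ}(P) + v_{ρ,σ}(Q) - (ρ+σ)`. -/
def Proportional (ρ σ : ℤ) (l : ℕ) (P Q : E K) : Prop :=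
  vdeg K ρ σ l (brk K P Q) + (((ρ : ℚ) + (σ : ℚ) : ℚ) : WithBot ℚ)
    < vdeg K ρ σ l P + vdeg K ρ σ l Q

/-- The `(ρ,σ)`-bracket `[P,Q]_{ρ,σ} ∈ L⁽ˡ⁾`. -/
def rsBrk (ρ σ : ℤ) (l : ℕ) (P Q : E K) : Lalg K :=
  if Proportional K ρ σ l P Q then 0 else ell K ρ σ l (brk K P Q)

/-- `(ρ,σ) ∈ Dir(P)`. -/
def InDir (ρ σ : ℤ) (l : ℕ) (P : E K) : Prop :=
  V ρ σ ∧ 1 < (ltRep K ρ σ l P).support.card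

/-- `(ρ,σ) ∈ Dir̄(P)`. -/
def InDirBar (ρ σ : ℤ) (l : ℕ) (P : E K) : Prop :=
  InDir K ρ σ l P ∨ (ρ, σ) = ((1 : ℤ), (-1 : ℤ)) ∨ (ρ, σ) = ((-1 : ℤ), (1 : ℤ))

/-- The minimal second exponent occurring in a coefficient family. -/
def minSnd (f : (ℤ × ℕ) →₀ K) : ℕ :=
  if h : f.support.Nonempty then (f.support.image Prod.snd).min' (h.image _) else 0

/-- The univariate polynomial `f_{P,ρ,σ} ∈ K[x]`: writing
`ℓ_{ρ,σ}(P) = ∑_{i=0}^{γ} a_i·x^{r/l - iσ/ρ}·y^{s+i}`, it is `∑ a_i·xⁱ`. -/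
def fPol (ρ σ : ℤ) (l : ℕ) (P : E K) : Polynomial K :=
  ∑ p ∈ (ltRep K ρ σ l P).support,
    Polynomial.C (ltRep K ρ σ l P p) *
      Polynomial.X ^ (p.2 - minSnd K (ltRep K ρ σ l P))

/-- The total degree `v_{1,1}(P)` of an element of the Weyl algebra, as a natural number. -/
def tdeg (P : E K) : ℕ :=
  (rep K 1 P).support.sup fun p => p.1.toNat + p.2

/-- `(P,Q)` is a counterexample to the Dixmier conjecture: `[Q,P] = 1` but `P` and `Q`
do not generate the Weyl algebra `A₁` over `K`. -/
def IsCounterexample (P Q : E K) : Prop :=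
  P ∈ Weyl K ∧ Q ∈ Weyl K ∧ brk K Q P = 1 ∧ Algebra.adjoin K {P, Q} ≠ Weyl K

/-- A minimal pair: a counterexample minimizing `gcd(v_{1,1}(P), v_{1,1}(Q))`. -/
def IsMinimalPair (P Q : E K) : Prop :=
  IsCounterexample K P Q ∧
    ∀ P' Q' : E K, IsCounterexample K P' Q' →
      Nat.gcd (tdeg K P) (tdeg K Q) ≤ Nat.gcd (tdeg K P') (tdeg K Q')

/-- `P` is subrectangular (with some vertex `(a,b) ∈ ℕ × ℕ`). -/
def Subrectangular (P : E K) : Prop :=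
  ∃ a b : ℕ, 0 < a ∧ 0 < b ∧ ((a : ℚ), (b : ℚ)) ∈ Supp K 1 P ∧
    ∀ q ∈ Supp K 1 P, 0 ≤ q.1 ∧ q.1 ≤ (a : ℚ) ∧ 0 ≤ q.2 ∧ q.2 ≤ (b : ℚ)

/-- A standard minimal pair. -/
def IsStandardMinimalPair (P Q : E K) : Prop :=
  IsMinimalPair K P Q ∧ Subrectangular K P ∧ Subrectangular K Q ∧
    vp 1 (-1) (stP K 1 0 1 P) < 0 ∧ vp 1 (-1) (stP K 1 0 1 Q) < 0

/-- The commutative algebra of "polynomials" with exponents in `ℚ²`, used to express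
monomials such as `x^{r/l - iσ/ρ}·y^{s+i}`. -/
abbrev LQ (K : Type*) [Field K] := AddMonoidAlgebra K (ℚ × ℚ)

/-- The embedding of `L⁽ˡ⁾` into `LQ`, sending `x^{i/l}·y^j` to the monomial with
exponent `(i/l, j)`. -/
def toLQ (l : ℕ) (R : Lalg K) : LQ K := AddMonoidAlgebra.ofCoeff (Finsupp.mapDomain (pt l) R.coeff)

/-- The generalized binomial coefficient `binom(q,k) = q(q-1)⋯(q-k+1)/k!`. -/
def qchoose (q : ℚ) (k : ℕ) : ℚ :=
  (∏ m ∈ Finset.range k, (q - (m : ℚ))) / (k.factorial : ℚ)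

end Dixmier

end

/-!
Write `P = ∑ f(i,j) X^{i/l} Y^j` and `Q = ∑ g(i,j) X^{i/l} Y^j`. Normal ordering gives
`X^{a/l} Y^i · X^{b/l} Y^j = ∑ₖ C(i,k) (b/l)ₖ X^{(a+b-kl)/l} Y^{i+j-k}` with `(x)ₖ` the falling
factorial; the term of order `k` sits at the commutative product shifted by `-k·(1,1)`, so it lowers
`v_{ρ,σ}` by `k(ρ+σ) > 0`. Let `p`, `q` be the points of `Supp ℓ_{ρ,σ}(P)`, `Supp ℓ_{ρ,σ}(Q)` that
maximize `v_{c,d}`, with `(c,d) = (1,-1)` for `st` and `(-1,1)` for `en`. In `[P,Q]` the order-`0`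
terms cancel, and at `p + q - (1,1)` the only surviving term is the first-order term of the pair
`(p,q)`, whose coefficient is `-f(p) g(q) (p × q)`. This point has `v_{ρ,σ}` equal to
`v(P) + v(Q) - (ρ+σ)`, so proportionality of `P` and `Q` forces `p × q = 0`.
-/

namespace Dixmier

open Polynomial LaurentPolynomial Finset

section DescPochhammer

variable {R : Type*} [CommRing R]

theorem descPochhammer_int_smeval (x : R) (n : ℕ) :
    (descPochhammer ℤ n).smeval x = (descPochhammer R n).eval x := by
  rw [← aeval_eq_smeval, aeval_def, eval₂_eq_eval_map, descPochhammer_map]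

theorem descPochhammer_eval_add (u v : R) (n : ℕ) :
    (descPochhammer R n).eval (u + v) = ∑ ij ∈ antidiagonal n,
      (n.choose ij.1 : R) * ((descPochhammer R ij.1).eval u * (descPochhammer R ij.2).eval v) := by
  simpa only [descPochhammer_int_smeval] using Ring.descPochhammer_smeval_add n (Commute.all u v)

theorem descPochhammer_eval_mul_eval_sub (u : R) (m n : ℕ) :
    (descPochhammer R m).eval u * (descPochhammer R n).eval (u - m) =
      (descPochhammer R (m + n)).eval u := by
  rw [← descPochhammer_mul, eval_mul, eval_comp, eval_sub, eval_X, eval_natCast]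

/-- The scalar identity behind the normal ordering of `X^{a/l} Y^i · X^{b/l} Y^j`, applied to
`t^n` with `u = n/l` and `v = b/l`. -/
theorem descPochhammer_eval_mul_eval_add_sub (u v : R) (i j : ℕ) :
    (descPochhammer R j).eval u * (descPochhammer R i).eval (u + v - j) =
      ∑ k ∈ range (i + j + 1),
        (i.choose k : R) * (descPochhammer R k).eval v * (descPochhammer R (i + j - k)).eval u := by
  rw [show u + v - j = v + (u - j) by ring, descPochhammer_eval_add, mul_sum,
    Nat.sum_antidiagonal_eq_sum_range_succ fun k r =>
      (descPochhammer R j).eval u * ((i.choose k : R) *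
        ((descPochhammer R k).eval v * (descPochhammer R r).eval (u - j)))]
  refine (sum_congr rfl fun k hk => ?_).trans
    (sum_subset (range_subset_range.2 (by omega)) fun k _ hk => ?_)
  · rw [show i + j - k = j + (i - k) by have := mem_range.1 hk; omega,
      ← descPochhammer_eval_mul_eval_sub u j]
    ring
  · rw [Nat.choose_eq_zero_of_lt (by simpa using hk)]
    simp

end DescPochhammer

theorem linearIndependent_descPochhammer (R : Type*) [Ring R] [IsDomain R] :
    LinearIndependent R (descPochhammer R) :=
  Sequence.linearIndependent ⟨descPochhammer R, fun n => by
    rw [degree_eq_natDegree (monic_descPochhammer R n).ne_zero, descPochhammer_natDegree]⟩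

theorem eq_zero_of_sum_smul_descPochhammer_eq_zero {R ι : Type*} [Ring R] [IsDomain R]
    {S : Finset ι} {d : ι → ℕ} (hd : Set.InjOn d S) {c : ι → R}
    (h : ∑ i ∈ S, c i • descPochhammer R (d i) = 0) {i : ι} (hi : i ∈ S) : c i = 0 := by
  have hli := (linearIndependent_descPochhammer R).comp _ hd.injective
  rw [Fintype.linearIndependent_iff] at hli
  exact hli (fun i => c i) (by rwa [← sum_coe_sort S] at h) ⟨i, hi⟩

theorem E_ext {K : Type*} [Field K] {F G : E K} (h : ∀ n : ℤ, F (T n) = G (T n)) : F = G :=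
  AddMonoidAlgebra.lhom_ext' fun n => LinearMap.ext_ring (h n)

theorem Xpow_T {K : Type*} [Field K] (i n : ℤ) : Xpow K i (T n) = T (n + i) := by
  rw [Xpow, LinearMap.mulLeft_apply, ← T_add, add_comm]

section Action

variable {K : Type*} [Field K] [CharZero K] {l : ℕ}

theorem Yop_T (n : ℤ) : Yop K l (T n) = ((n : K) / l) • T (n - l) := by
  have h : (T n : Laur K).coeff = Finsupp.single n 1 := rfl
  rw [Yop, LinearMap.comp_apply, LinearEquiv.coe_toLinearMap,
    AddMonoidAlgebra.coeffLinearEquiv_apply, h, Finsupp.linearCombination_single, one_smul,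
    map_div₀, map_intCast, map_natCast]

theorem Yop_pow_T (hl : l ≠ 0) (j : ℕ) (n : ℤ) :
    (Yop K l ^ j) (T n) = (descPochhammer K j).eval ((n : K) / l) • T (n - j * l) := by
  induction j with
  | zero => simp
  | succ j ih =>
    have hn : ((n - j * l : ℤ) : K) / l = (n : K) / l - j := by push_cast; field_simp
    rw [pow_succ', Module.End.mul_apply, ih, map_smul, Yop_T, smul_smul, hn,
      ← descPochhammer_succ_eval]
    congr 2
    push_cast
    ring

theorem Xpow_mul_Yop_pow_T (hl : l ≠ 0) (p : ℤ × ℕ) (n : ℤ) :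
    (Xpow K p.1 * Yop K l ^ p.2) (T n) =
      (descPochhammer K p.2).eval ((n : K) / l) • T (n + p.1 - p.2 * l) := by
  rw [Module.End.mul_apply, Yop_pow_T hl, map_smul, Xpow_T, sub_add_eq_add_sub]

theorem toEnd_single (p : ℤ × ℕ) (a : K) :
    toEnd K l (Finsupp.single p a) = a • (Xpow K p.1 * Yop K l ^ p.2) :=
  Finsupp.linearCombination_single _ _ _

theorem toEnd_eq_sum (f : (ℤ × ℕ) →₀ K) :
    toEnd K l f = ∑ p ∈ f.support, f p • (Xpow K p.1 * Yop K l ^ p.2) := by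
  rw [toEnd, Finsupp.linearCombination_apply, Finsupp.sum]

theorem toEnd_apply_T_coeff (hl : l ≠ 0) (f : (ℤ × ℕ) →₀ K) (n s : ℤ) :
    (toEnd K l f (T n)).coeff (n + s) =
      ∑ p ∈ f.support with p.1 - p.2 * l = s, f p * (descPochhammer K p.2).eval ((n : K) / l) := by
  rw [toEnd_eq_sum, LinearMap.sum_apply, AddMonoidAlgebra.coeff_sum,
    Finset.sum_apply', sum_filter]
  refine sum_congr rfl fun p _ => ?_
  rw [LinearMap.smul_apply, Xpow_mul_Yop_pow_T hl, smul_smul, AddMonoidAlgebra.coeff_smul_apply, T_apply,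
    smul_eq_mul]
  by_cases h : p.1 - p.2 * l = s
  · rw [if_pos (by omega), if_pos h, mul_one]
  · rw [if_neg (by omega), if_neg h, mul_zero]

end Action

section Representation

variable {K : Type*} [Field K] [CharZero K] {l : ℕ}

theorem toEnd_injective (hl : l ≠ 0) : Function.Injective (toEnd K l) := by
  refine (injective_iff_map_eq_zero _).2 fun f hf => Finsupp.ext fun p₀ => ?_
  by_contra hp₀
  -- on the diagonal `i - jl = s` the coefficient of `t^{n+s}` in `toEnd f (t^n)` is a polynomial
  -- in `n/l` with coefficients `f(i,j)` in the basis `descPochhammer K j`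
  set S := f.support.filter fun p => p.1 - p.2 * l = p₀.1 - p₀.2 * l
  have hroot : ∀ n : ℤ, (∑ p ∈ S, f p • descPochhammer K p.2).eval ((n : K) / l) = 0 := by
    intro n
    simp only [eval_finsetSum, eval_smul, smul_eq_mul]
    rw [← toEnd_apply_T_coeff hl, hf]
    rfl
  have hzero : ∑ p ∈ S, f p • descPochhammer K p.2 = 0 := by
    refine eq_zero_of_infinite_isRoot _ (Set.Infinite.mono ?_ (Set.infinite_range_of_injective
      (f := fun n : ℤ => (n : K) / l) fun m n h => ?_))
    · rintro _ ⟨n, rfl⟩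
      exact hroot n
    · exact_mod_cast (div_left_inj' (Nat.cast_ne_zero.2 hl)).1 h
  have hinj : Set.InjOn Prod.snd (S : Set (ℤ × ℕ)) := fun p hp q hq h => by
    have hp' := (mem_filter.1 hp).2
    have hq' := (mem_filter.1 hq).2
    have h' : (p.2 : ℤ) = q.2 := congrArg _ h
    exact Prod.ext (by rw [h'] at hp'; omega) h
  exact hp₀ (eq_zero_of_sum_smul_descPochhammer_eq_zero hinj hzero
    (mem_filter.2 ⟨Finsupp.mem_support_iff.2 hp₀, rfl⟩))

theorem rep_toEnd (hl : l ≠ 0) (f : (ℤ × ℕ) →₀ K) : rep K l (toEnd K l f) = f := by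
  rw [rep, dif_pos ⟨f, rfl⟩]
  exact toEnd_injective hl (⟨f, rfl⟩ : ∃ g, toEnd K l g = toEnd K l f).choose_spec

theorem toEnd_rep {P : E K} (h : rep K l P ≠ 0) : toEnd K l (rep K l P) = P := by
  unfold rep at h ⊢
  split_ifs at h ⊢ with hP
  · exact hP.choose_spec
  · exact absurd rfl h

end Representation

def mulExp (l : ℕ) (p q : ℤ × ℕ) (k : ℕ) : ℤ × ℕ := (p.1 + q.1 - k * l, p.2 + q.2 - k)

theorem mulExp_comm (l : ℕ) (p q : ℤ × ℕ) (k : ℕ) : mulExp l p q k = mulExp l q p k := by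
  simp only [mulExp, add_comm]

noncomputable def mulCoeff (K : Type*) [Field K] (l : ℕ) (p q : ℤ × ℕ) (k : ℕ) : K :=
  (p.2.choose k : K) * (descPochhammer K k).eval ((q.1 : K) / l)

/-- `X^{p₁/l} Y^{p₂} · X^{q₁/l} Y^{q₂} = ∑ₖ C(p₂,k) (q₁/l)ₖ X^{(p₁+q₁-kl)/l} Y^{p₂+q₂-k}`, with
`(x)ₖ` the falling factorial. The binomial vanishes for `k > p₂`; summing up to `p₂ + q₂` makes the
range symmetric in `p` and `q`, so that the order-`0` terms cancel termwise in a commutator. -/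
noncomputable def monoMul (K : Type*) [Field K] (l : ℕ) (p q : ℤ × ℕ) : (ℤ × ℕ) →₀ K :=
  ∑ k ∈ range (p.2 + q.2 + 1), Finsupp.single (mulExp l p q k) (mulCoeff K l p q k)

noncomputable def repMul (K : Type*) [Field K] (l : ℕ) (f g : (ℤ × ℕ) →₀ K) : (ℤ × ℕ) →₀ K :=
  ∑ p ∈ f.support, ∑ q ∈ g.support, (f p * g q) • monoMul K l p q

section Product

variable {K : Type*} [Field K] [CharZero K] {l : ℕ}

theorem toEnd_monoMul (hl : l ≠ 0) (p q : ℤ × ℕ) :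
    toEnd K l (monoMul K l p q) = (Xpow K p.1 * Yop K l ^ p.2) * (Xpow K q.1 * Yop K l ^ q.2) := by
  refine E_ext fun n => ?_
  have hu : ((n + q.1 - q.2 * l : ℤ) : K) / l = (n : K) / l + (q.1 : K) / l - q.2 := by
    push_cast; field_simp
  rw [Module.End.mul_apply, Xpow_mul_Yop_pow_T hl, map_smul, Xpow_mul_Yop_pow_T hl, smul_smul, hu,
    descPochhammer_eval_mul_eval_add_sub, monoMul, map_sum, LinearMap.sum_apply, sum_smul]
  refine sum_congr rfl fun k hk => ?_
  have hk : k ≤ p.2 + q.2 := Nat.lt_succ_iff.1 (mem_range.1 hk)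
  rw [toEnd_single, LinearMap.smul_apply, Xpow_mul_Yop_pow_T hl, smul_smul, mulExp, mulCoeff]
  congr 2
  push_cast [hk]
  ring

theorem toEnd_repMul (hl : l ≠ 0) (f g : (ℤ × ℕ) →₀ K) :
    toEnd K l (repMul K l f g) = toEnd K l f * toEnd K l g := by
  simp only [repMul, map_sum, map_smul, toEnd_monoMul hl, toEnd_eq_sum, sum_mul, mul_sum,
    smul_mul_smul_comm]
  exact sum_comm

theorem rep_brk (hl : l ≠ 0) {P Q : E K} (hP : rep K l P ≠ 0) (hQ : rep K l Q ≠ 0) :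
    rep K l (brk K P Q) =
      repMul K l (rep K l P) (rep K l Q) - repMul K l (rep K l Q) (rep K l P) := by
  rw [← rep_toEnd hl (_ - _), map_sub, toEnd_repMul hl, toEnd_repMul hl, toEnd_rep hP,
    toEnd_rep hQ, brk]

end Product

theorem pt_injective {l : ℕ} (hl : l ≠ 0) : Function.Injective (pt l) := fun p q h => by
  simp only [pt, Prod.mk.injEq] at h
  obtain ⟨h₁, h₂⟩ := h
  rw [div_left_inj' (Nat.cast_ne_zero.2 hl)] at h₁
  exact Prod.ext (by exact_mod_cast h₁) (by exact_mod_cast h₂)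

theorem eq_of_vp_eq_of_vp_eq {ρ σ c d : ℤ} (hdet : ρ * d - σ * c ≠ 0) {A B : ℚ × ℚ}
    (hv : vp ρ σ A = vp ρ σ B) (hw : vp c d A = vp c d B) : A = B := by
  have hdet' : (ρ * d - σ * c : ℚ) ≠ 0 := by exact_mod_cast hdet
  simp only [vp] at hv hw
  refine Prod.ext (mul_left_cancel₀ hdet' ?_) (mul_left_cancel₀ hdet' ?_)
  · linear_combination d * hv - σ * hw
  · linear_combination ρ * hw - c * hv

theorem vp_pt_mulExp {l : ℕ} (hl : l ≠ 0) (a b : ℤ) {p q : ℤ × ℕ} {k : ℕ} (hk : k ≤ p.2 + q.2) :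
    vp a b (pt l (mulExp l p q k)) = vp a b (pt l p) + vp a b (pt l q) - k * (a + b) := by
  simp only [vp, pt, mulExp]
  push_cast [hk]
  field_simp
  ring

/-- With `(c,d) = (1,-1)` the point `pt l p₀` is `st_{ρ,σ}`, with `(c,d) = (-1,1)` it is
`en_{ρ,σ}`, of the element with support `s`. -/
def IsLexMax (ρ σ c d : ℤ) (l : ℕ) (s : Finset (ℤ × ℕ)) (p₀ : ℤ × ℕ) : Prop :=
  p₀ ∈ s ∧ ∀ p ∈ s, toLex (vp ρ σ (pt l p), vp c d (pt l p)) ≤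
    toLex (vp ρ σ (pt l p₀), vp c d (pt l p₀))

theorem exists_isLexMax (ρ σ c d : ℤ) (l : ℕ) {s : Finset (ℤ × ℕ)} (hs : s.Nonempty) :
    ∃ p₀, IsLexMax ρ σ c d l s p₀ :=
  s.exists_max_image (fun p => toLex (vp ρ σ (pt l p), vp c d (pt l p))) hs

namespace IsLexMax

variable {ρ σ c d : ℤ} {l : ℕ} {s t : Finset (ℤ × ℕ)} {p₀ p q pP pQ : ℤ × ℕ}

theorem vp_le (h : IsLexMax ρ σ c d l s p₀) (hp : p ∈ s) :
    vp ρ σ (pt l p) ≤ vp ρ σ (pt l p₀) :=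
  (Prod.Lex.toLex_le_toLex.1 (h.2 p hp)).elim le_of_lt (·.1.le)

theorem vp_le_of_vp_eq (h : IsLexMax ρ σ c d l s p₀) (hp : p ∈ s)
    (hv : vp ρ σ (pt l p) = vp ρ σ (pt l p₀)) : vp c d (pt l p) ≤ vp c d (pt l p₀) :=
  (Prod.Lex.toLex_le_toLex.1 (h.2 p hp)).elim (absurd hv ·.ne) (·.2)

/-- The term of order `k` of `monoMul p q` lies `k(ρ+σ)` below `v(p) + v(q)` in `v_{ρ,σ}`, so among
terms of positive order only the first-order term of `(pP, pQ)` reaches `mulExp l pP pQ 1`. -/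
theorem eq_of_mulExp_eq (hl : l ≠ 0) (hρσ : 0 < ρ + σ) (hdet : ρ * d - σ * c ≠ 0)
    (hP : IsLexMax ρ σ c d l s pP) (hQ : IsLexMax ρ σ c d l t pQ) (h₁ : 1 ≤ pP.2 + pQ.2)
    (hp : p ∈ s) (hq : q ∈ t) {k : ℕ} (hk₀ : k ≠ 0) (hk : k ≤ p.2 + q.2)
    (h : mulExp l p q k = mulExp l pP pQ 1) : k = 1 ∧ p = pP ∧ q = pQ := by
  have hv := congrArg (vp ρ σ ∘ pt l) h
  have hw := congrArg (vp c d ∘ pt l) h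
  simp only [Function.comp, vp_pt_mulExp hl _ _ hk, vp_pt_mulExp hl _ _ h₁, Nat.cast_one] at hv hw
  have hpv := hP.vp_le hp
  have hqv := hQ.vp_le hq
  have hρσ' : (0 : ℚ) < ρ + σ := by exact_mod_cast hρσ
  have hk₁ : k = 1 := by
    by_contra hk₁
    have : (2 : ℚ) ≤ k := by exact_mod_cast (by omega : 2 ≤ k)
    nlinarith
  subst hk₁
  simp only [Nat.cast_one] at hv hw
  have hpv' : vp ρ σ (pt l p) = vp ρ σ (pt l pP) := by linarith
  have hqv' : vp ρ σ (pt l q) = vp ρ σ (pt l pQ) := by linarith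
  have hpw := hP.vp_le_of_vp_eq hp hpv'
  have hqw := hQ.vp_le_of_vp_eq hq hqv'
  refine ⟨rfl, pt_injective hl (eq_of_vp_eq_of_vp_eq hdet hpv' ?_),
    pt_injective hl (eq_of_vp_eq_of_vp_eq hdet hqv' ?_)⟩ <;> linarith

end IsLexMax

section Commutator

variable {K : Type*} [Field K] {l : ℕ}

theorem mulCoeff_zero (p q : ℤ × ℕ) : mulCoeff K l p q 0 = 1 := by
  simp [mulCoeff]

theorem monoMul_sub_monoMul_swap (p q : ℤ × ℕ) :
    monoMul K l p q - monoMul K l q p = ∑ k ∈ range (p.2 + q.2 + 1),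
      Finsupp.single (mulExp l p q k) (mulCoeff K l p q k - mulCoeff K l q p k) := by
  rw [monoMul, monoMul, add_comm q.2, ← sum_sub_distrib]
  simp_rw [mulExp_comm l q p, Finsupp.single_sub]

theorem repMul_sub_repMul_swap (f g : (ℤ × ℕ) →₀ K) :
    repMul K l f g - repMul K l g f =
      ∑ p ∈ f.support, ∑ q ∈ g.support, (f p * g q) • (monoMul K l p q - monoMul K l q p) := by
  rw [repMul, repMul, sum_comm (s := g.support), ← sum_sub_distrib]
  simp_rw [← sum_sub_distrib, smul_sub, mul_comm (g _)]

variable {ρ σ c d : ℤ} {s t : Finset (ℤ × ℕ)} {pP pQ : ℤ × ℕ}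

theorem monoMul_sub_monoMul_swap_apply_mulExp_one (hl : l ≠ 0) (hρσ : 0 < ρ + σ)
    (hdet : ρ * d - σ * c ≠ 0) (hP : IsLexMax ρ σ c d l s pP) (hQ : IsLexMax ρ σ c d l t pQ)
    (h₁ : 1 ≤ pP.2 + pQ.2) {p q : ℤ × ℕ} (hp : p ∈ s) (hq : q ∈ t) :
    (monoMul K l p q - monoMul K l q p) (mulExp l pP pQ 1) =
      if p = pP ∧ q = pQ then mulCoeff K l pP pQ 1 - mulCoeff K l pQ pP 1 else 0 := by
  have hterm : ∀ k ∈ range (p.2 + q.2 + 1), mulExp l p q k = mulExp l pP pQ 1 →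
      mulCoeff K l p q k - mulCoeff K l q p k ≠ 0 → k = 1 ∧ p = pP ∧ q = pQ := by
    intro k hk h hne
    rcases eq_or_ne k 0 with rfl | hk₀
    · simp [mulCoeff_zero] at hne
    · exact hP.eq_of_mulExp_eq hl hρσ hdet hQ h₁ hp hq hk₀ (Nat.lt_succ_iff.1 (mem_range.1 hk)) h
  rw [monoMul_sub_monoMul_swap, Finsupp.finsetSum_apply]
  simp_rw [Finsupp.single_apply]
  split_ifs with hpq
  · obtain ⟨rfl, rfl⟩ := hpq
    refine (sum_eq_single_of_mem 1 (mem_range.2 (by omega)) fun k hk hk₁ => ?_).trans (if_pos rfl)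
    refine ite_eq_right_iff.2 fun h => ?_
    by_contra hne
    exact hk₁ (hterm k hk h hne).1
  · refine sum_eq_zero fun k hk => ?_
    refine ite_eq_right_iff.2 fun h => ?_
    by_contra hne
    exact hpq (hterm k hk h hne).2

variable [CharZero K]

theorem mulCoeff_one_sub_mulCoeff_one (p q : ℤ × ℕ) :
    mulCoeff K l p q 1 - mulCoeff K l q p 1 = -(cross (pt l p) (pt l q) : K) := by
  simp only [mulCoeff, Nat.choose_one_right, descPochhammer_one, eval_X, cross, pt]
  push_cast
  ring

theorem repMul_sub_repMul_swap_apply_mulExp_one (hl : l ≠ 0) (hρσ : 0 < ρ + σ)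
    (hdet : ρ * d - σ * c ≠ 0) {f g : (ℤ × ℕ) →₀ K} (hP : IsLexMax ρ σ c d l f.support pP)
    (hQ : IsLexMax ρ σ c d l g.support pQ) (h₁ : 1 ≤ pP.2 + pQ.2) :
    (repMul K l f g - repMul K l g f) (mulExp l pP pQ 1) =
      -(f pP * g pQ * (cross (pt l pP) (pt l pQ) : K)) := by
  simp only [repMul_sub_repMul_swap, Finsupp.finsetSum_apply, Finsupp.smul_apply, smul_eq_mul]
  rw [sum_congr rfl fun p hp => sum_congr rfl fun q hq => by
    rw [monoMul_sub_monoMul_swap_apply_mulExp_one hl hρσ hdet hP hQ h₁ hp hq]]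
  simp [ite_and, hP.1, hQ.1, mulCoeff_one_sub_mulCoeff_one]

end Commutator

section LeadingForm

variable {K : Type*} [Field K] [CharZero K] {ρ σ c d : ℤ} {l : ℕ} {P Q : E K} {p₀ : ℤ × ℕ}

theorem vdeg_eq_bot_iff : vdeg K ρ σ l P = ⊥ ↔ rep K l P = 0 := by
  simp [vdeg, Finset.sup_eq_bot_iff, ← Finsupp.support_eq_empty, eq_empty_iff_forall_notMem]

namespace IsLexMax

theorem vdeg_eq (h : IsLexMax ρ σ c d l (rep K l P).support p₀) :
    vdeg K ρ σ l P = vp ρ σ (pt l p₀) :=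
  le_antisymm (Finset.sup_le fun _ hp => WithBot.coe_le_coe.2 (h.vp_le hp))
    (Finset.le_sup (f := fun p => (vp ρ σ (pt l p) : WithBot ℚ)) h.1)

theorem mem_support_ltRep_iff (h : IsLexMax ρ σ c d l (rep K l P).support p₀) {p : ℤ × ℕ} :
    p ∈ (ltRep K ρ σ l P).support ↔
      p ∈ (rep K l P).support ∧ vp ρ σ (pt l p) = vp ρ σ (pt l p₀) := by
  rw [ltRep, Finsupp.support_filter, mem_filter, h.vdeg_eq, WithBot.coe_inj]

theorem isMaxOn_suppPts_ltRep_iff (hdet : ρ * d - σ * c ≠ 0)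
    (h : IsLexMax ρ σ c d l (rep K l P).support p₀) {A : ℚ × ℚ} :
    (A ∈ suppPts K l (ltRep K ρ σ l P) ∧
      ∀ B ∈ suppPts K l (ltRep K ρ σ l P), vp c d B ≤ vp c d A) ↔ A = pt l p₀ := by
  have hp₀ : pt l p₀ ∈ suppPts K l (ltRep K ρ σ l P) :=
    ⟨p₀, h.mem_support_ltRep_iff.2 ⟨h.1, rfl⟩, rfl⟩
  constructor
  · rintro ⟨⟨p, hp, rfl⟩, hmax⟩
    rw [mem_coe, h.mem_support_ltRep_iff] at hp
    exact eq_of_vp_eq_of_vp_eq hdet hp.2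
      (le_antisymm (h.vp_le_of_vp_eq hp.1 hp.2) (hmax _ hp₀))
  · rintro rfl
    refine ⟨hp₀, ?_⟩
    rintro _ ⟨p, hp, rfl⟩
    rw [mem_coe, h.mem_support_ltRep_iff] at hp
    exact h.vp_le_of_vp_eq hp.1 hp.2

theorem stP_eq (hρσ : ρ + σ ≠ 0) (h : IsLexMax ρ σ 1 (-1) l (rep K l P).support p₀) :
    stP K ρ σ l P = pt l p₀ := by
  have hdet : ρ * -1 - σ * 1 ≠ 0 := by omega
  have hst : ∃ A, IsStOf K ρ σ l P A := ⟨_, (h.isMaxOn_suppPts_ltRep_iff hdet).2 rfl⟩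
  rw [stP, dif_pos hst]
  exact (h.isMaxOn_suppPts_ltRep_iff hdet).1 hst.choose_spec

theorem enP_eq (hρσ : ρ + σ ≠ 0) (h : IsLexMax ρ σ (-1) 1 l (rep K l P).support p₀) :
    enP K ρ σ l P = pt l p₀ := by
  have hdet : ρ * 1 - σ * -1 ≠ 0 := by omega
  have hen : ∃ A, IsEnOf K ρ σ l P A := ⟨_, (h.isMaxOn_suppPts_ltRep_iff hdet).2 rfl⟩
  rw [enP, dif_pos hen]
  exact (h.isMaxOn_suppPts_ltRep_iff hdet).1 hen.choose_spec

end IsLexMax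

theorem stP_eq_zero_of_rep_eq_zero (h : rep K l P = 0) : stP K ρ σ l P = 0 := by
  rw [stP, dif_neg]
  rintro ⟨_, ⟨p, hp, -⟩, -⟩
  simp [ltRep, h] at hp

theorem enP_eq_zero_of_rep_eq_zero (h : rep K l P = 0) : enP K ρ σ l P = 0 := by
  rw [enP, dif_neg]
  rintro ⟨_, ⟨p, hp, -⟩, -⟩
  simp [ltRep, h] at hp

theorem ltRep_ne_zero (h : rep K l P ≠ 0) : ltRep K ρ σ l P ≠ 0 := by
  obtain ⟨p₀, hp₀⟩ := exists_isLexMax ρ σ 0 0 l (Finsupp.support_nonempty_iff.2 h)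
  exact Finsupp.support_nonempty_iff.1 ⟨p₀, hp₀.mem_support_ltRep_iff.2 ⟨hp₀.1, rfl⟩⟩

theorem proportional_of_rsBrk_eq_zero (hP : rep K l P ≠ 0) (hQ : rep K l Q ≠ 0)
    (h : rsBrk K ρ σ l P Q = 0) : Proportional K ρ σ l P Q := by
  by_contra hprop
  rw [rsBrk, if_neg hprop] at h
  have hB : rep K l (brk K P Q) = 0 := by
    by_contra hB
    exact ltRep_ne_zero hB (congrArg AddMonoidAlgebra.coeff h)
  apply hprop
  rw [Proportional, vdeg_eq_bot_iff.2 hB, WithBot.bot_add, bot_lt_iff_ne_bot]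
  exact WithBot.add_ne_bot.2 ⟨mt vdeg_eq_bot_iff.1 hP, mt vdeg_eq_bot_iff.1 hQ⟩

theorem rep_brk_apply_eq_zero (hprop : Proportional K ρ σ l P Q) {a b : ℚ}
    (ha : vdeg K ρ σ l P = a) (hb : vdeg K ρ σ l Q = b) {z : ℤ × ℕ}
    (hz : vp ρ σ (pt l z) + (ρ + σ) = a + b) : rep K l (brk K P Q) z = 0 := by
  by_contra hne
  have hle : (vp ρ σ (pt l z) : WithBot ℚ) ≤ vdeg K ρ σ l (brk K P Q) :=
    Finset.le_sup (f := fun p => (vp ρ σ (pt l p) : WithBot ℚ)) (Finsupp.mem_support_iff.2 hne)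
  have hlt := hprop
  rw [Proportional, ha, hb, ← WithBot.coe_add, ← hz, WithBot.coe_add] at hlt
  exact (add_le_add_left hle _).not_gt hlt

theorem cross_pt_eq_zero_of_proportional (hl : l ≠ 0) (hρσ : 0 < ρ + σ)
    (hdet : ρ * d - σ * c ≠ 0) (hprop : Proportional K ρ σ l P Q) {pP pQ : ℤ × ℕ}
    (hP : IsLexMax ρ σ c d l (rep K l P).support pP)
    (hQ : IsLexMax ρ σ c d l (rep K l Q).support pQ) : cross (pt l pP) (pt l pQ) = 0 := by
  rcases Nat.eq_zero_or_pos (pP.2 + pQ.2) with h₀ | h₁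
  · simp [cross, pt, show pP.2 = 0 by omega, show pQ.2 = 0 by omega]
  have hz := rep_brk_apply_eq_zero hprop hP.vdeg_eq hQ.vdeg_eq (z := mulExp l pP pQ 1)
    (by rw [vp_pt_mulExp hl _ _ h₁]; ring)
  rw [rep_brk hl (Finsupp.support_nonempty_iff.1 ⟨_, hP.1⟩)
      (Finsupp.support_nonempty_iff.1 ⟨_, hQ.1⟩),
    repMul_sub_repMul_swap_apply_mulExp_one hl hρσ hdet hP hQ h₁, neg_eq_zero, mul_eq_zero,
    mul_eq_zero, Rat.cast_eq_zero] at hz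
  exact hz.resolve_left (not_or.2 ⟨Finsupp.mem_support_iff.1 hP.1, Finsupp.mem_support_iff.1 hQ.1⟩)

end LeadingForm

theorem rsBracket_eq_zero_aligned_general (K : Type*) [Field K] [CharZero K] (l : ℕ) (hl : 0 < l)
    (ρ σ : ℤ) (h0 : V0 ρ σ) (P Q : E K)
    (hbr : rsBrk K ρ σ l P Q = 0) :
    cross (stP K ρ σ l P) (stP K ρ σ l Q) = 0 ∧
    cross (enP K ρ σ l P) (enP K ρ σ l Q) = 0 := by
  have hρσ : 0 < ρ + σ := h0.1.2
  by_cases hP : rep K l P = 0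
  · simp [stP_eq_zero_of_rep_eq_zero hP, enP_eq_zero_of_rep_eq_zero hP, cross]
  by_cases hQ : rep K l Q = 0
  · simp [stP_eq_zero_of_rep_eq_zero hQ, enP_eq_zero_of_rep_eq_zero hQ, cross]
  have hprop := proportional_of_rsBrk_eq_zero hP hQ hbr
  have hP' := Finsupp.support_nonempty_iff.2 hP
  have hQ' := Finsupp.support_nonempty_iff.2 hQ
  constructor
  · obtain ⟨pP, hpP⟩ := exists_isLexMax ρ σ 1 (-1) l hP'
    obtain ⟨pQ, hpQ⟩ := exists_isLexMax ρ σ 1 (-1) l hQ'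
    rw [hpP.stP_eq hρσ.ne', hpQ.stP_eq hρσ.ne']
    exact cross_pt_eq_zero_of_proportional hl.ne' hρσ (by omega) hprop hpP hpQ
  · obtain ⟨pP, hpP⟩ := exists_isLexMax ρ σ (-1) 1 l hP'
    obtain ⟨pQ, hpQ⟩ := exists_isLexMax ρ σ (-1) 1 l hQ'
    rw [hpP.enP_eq hρσ.ne', hpQ.enP_eq hρσ.ne']
    exact cross_pt_eq_zero_of_proportional hl.ne' hρσ (by omega) hprop hpP hpQ

theorem rsBracket_eq_zero_aligned (K : Type*) [Field K] [CharZero K] (l : ℕ) (hl : 0 < l)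
    (ρ σ : ℤ) (h0 : V0 ρ σ) (P Q : E K)
    (hP : P ∈ A1 K l) (hQ : Q ∈ A1 K l) (hP0 : P ≠ 0) (hQ0 : Q ≠ 0)
    (hbr : rsBrk K ρ σ l P Q = 0) :
    cross (stP K ρ σ l P) (stP K ρ σ l Q) = 0 ∧
    cross (enP K ρ σ l P) (enP K ρ σ l Q) = 0 :=
  rsBracket_eq_zero_aligned_general K l hl ρ σ h0 P Q hbr

end Dixmier
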